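/- For all natural numbers n, m, j: S_{s,q}[n+1, m+j+1] = Σ_{k=m}^{n} Σ_{r=0}^{n−k} S_{s,q}[k,m] · q^{(j+1)(k+(k−m)(s−1)) + j} · binom(r, j)_{q^{s−1}} · S_{s,q}[n−k, r] · Π_{t=0}^{r−j−1} [(k−m)(s−1) + k + 1 + t·(s−1)]_q (the outer sum being empty, hence 0, when m > n). -/

import Mathlib

/-- The `q`-bracket `[t]_q = (q^t - 1)/(q - 1)` (real exponentiation). -/
noncomputable def qBracket (q t : ℝ) : ℝ := (q ^ t - 1) / (q - 1)

open Classical in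
/-- The `Q`-binomial coefficient: the sum of `Q^(t₁+⋯+t_{n-k})` over all weakly
increasing integer tuples `0 ≤ t₁ ≤ ⋯ ≤ t_{n-k} ≤ k` when `k ≤ n`, and `0` when `k > n`. -/
noncomputable def qBinom (Q : ℝ) (n k : ℕ) : ℝ :=
  if k ≤ n then
    ∑ f ∈ Finset.univ.filter (fun f : Fin (n - k) → Fin (k + 1) => Monotone f),
      Q ^ (∑ i, (f i : ℕ))
  else 0

/-- The generalized `q`-Stirling numbers `S_{s,q}[n,k]` of Goldman–Haglund type. -/
noncomputable def genStirling (s q : ℝ) : ℕ → ℕ → ℝ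
  | 0, 0 => 1
  | 0, _ + 1 => 0
  | _ + 1, 0 => 0
  | n + 1, k + 1 =>
    if k + 1 ≤ n + 1 then
      q ^ (s * (n : ℝ) - (s - 1) * (k : ℝ)) * genStirling s q n k
        + qBracket q (s * (n : ℝ) - (s - 1) * ((k : ℝ) + 1)) * genStirling s q n (k + 1)
    else 0

/-!
Induction on `n`. By the recurrence for `S[n+2, m+j+1]` it suffices to show that each inner sum
`∑_r c_{j,k}(r) S[n-k, r]` satisfies the same two-term recurrence in `n`. Expanding `S[n+1-k, r]` by
its own recurrence and regrouping by `S[n-k, r]`, this becomes an identity between coefficients,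
which follows from the `q`-Pascal rule `binom(r+1, j+1)_Q = Q^(r-j) binom(r, j)_Q + binom(r, j+1)_Q`
(split monotone tuples by whether they start at `0`) and `[x + y]_q = [x]_q + q^x [y]_q`.
-/

open Finset

section MonotoneTuples

variable {R : Type*} [CommSemiring R]

open Classical in
noncomputable def monotoneTupleSum (Q : R) (d k : ℕ) : R :=
  ∑ f ∈ univ.filter (fun f : Fin d → Fin (k + 1) => Monotone f), Q ^ (∑ i, (f i : ℕ))

lemma monotoneTupleSum_zero_left (Q : R) (k : ℕ) : monotoneTupleSum Q 0 k = 1 := by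
  simp [monotoneTupleSum, Subsingleton.elim _ (fun i : Fin 0 => i.elim0), Subsingleton.monotone]

lemma monotoneTupleSum_zero_right (Q : R) (d : ℕ) : monotoneTupleSum Q d 0 = 1 := by
  simp [monotoneTupleSum, Subsingleton.elim _ (fun _ : Fin d => (0 : Fin 1)), monotone_const]

lemma monotone_cons_zero {d k : ℕ} {g : Fin d → Fin (k + 1)} (hg : Monotone g) :
    Monotone (Fin.cons 0 g : Fin (d + 1) → Fin (k + 1)) := by
  simp only [monotone_iff_forall_lt]
  exact (Fin.liftFun_cons _).2 ⟨fun i => Fin.zero_le _, fun a b hab => hg hab.le⟩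

open Classical in
lemma sum_monotone_head_eq_zero (Q : R) (d k : ℕ) :
    ∑ f ∈ (univ.filter fun f : Fin (d + 1) → Fin (k + 2) => Monotone f).filter (· 0 = 0),
      Q ^ (∑ i, (f i : ℕ)) = monotoneTupleSum Q d (k + 1) := by
  refine sum_nbij' Fin.tail (fun g => Fin.cons 0 g) ?_ ?_ ?_ ?_ ?_
  · simp only [mem_filter, mem_univ, true_and]
    exact fun f hf => hf.1.comp Fin.strictMono_succ.monotone
  · simp only [mem_filter, mem_univ, true_and]
    exact fun g hg => ⟨monotone_cons_zero hg, rfl⟩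
  · simp only [mem_filter, mem_univ, true_and]
    intro f hf
    rw [← hf.2, Fin.cons_self_tail]
  · exact fun g _ => Fin.tail_cons _ _
  · simp only [mem_filter, mem_univ, true_and]
    intro f hf
    simp [Fin.sum_univ_succ, hf.2, Fin.tail]

open Classical in
lemma sum_monotone_head_ne_zero (Q : R) (d k : ℕ) :
    ∑ f ∈ (univ.filter fun f : Fin (d + 1) → Fin (k + 2) => Monotone f).filter (¬ · 0 = 0),
      Q ^ (∑ i, (f i : ℕ)) = Q ^ (d + 1) * monotoneTupleSum Q (d + 1) k := by
  rw [monotoneTupleSum, mul_sum, eq_comm]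
  refine sum_nbij' (fun g => Fin.succ ∘ g) (fun f => Fin.predAbove 0 ∘ f) ?_ ?_ ?_ ?_ ?_
  · simp only [mem_filter, mem_univ, true_and]
    exact fun g hg => ⟨Fin.strictMono_succ.monotone.comp hg, Fin.succ_ne_zero _⟩
  · simp only [mem_filter, mem_univ, true_and]
    exact fun f hf => (Fin.predAbove_right_monotone 0).comp hf.1
  · exact fun g _ => funext fun i => Fin.predAbove_zero_succ
  · simp only [mem_filter, mem_univ, true_and]
    intro f hf
    funext i
    have hfi : f i ≠ 0 := (Fin.pos_iff_ne_zero.2 hf.2).trans_le (hf.1 (Fin.zero_le i)) |>.ne'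
    exact Fin.succ_predAbove_zero hfi
  · intro g _
    simp [sum_add_distrib, pow_add, mul_comm]

lemma monotoneTupleSum_succ_succ (Q : R) (d k : ℕ) :
    monotoneTupleSum Q (d + 1) (k + 1)
      = monotoneTupleSum Q d (k + 1) + Q ^ (d + 1) * monotoneTupleSum Q (d + 1) k := by
  classical
  rw [monotoneTupleSum, ← sum_filter_add_sum_filter_not _ (· 0 = 0),
    sum_monotone_head_eq_zero, sum_monotone_head_ne_zero]

end MonotoneTuples

lemma qBinom_eq_monotoneTupleSum (Q : ℝ) {n k : ℕ} (h : k ≤ n) :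
    qBinom Q n k = monotoneTupleSum Q (n - k) k := by
  rw [qBinom, if_pos h, monotoneTupleSum]

lemma qBinom_of_lt (Q : ℝ) {n k : ℕ} (h : n < k) : qBinom Q n k = 0 := by
  rw [qBinom, if_neg h.not_ge]

lemma qBinom_zero_right (Q : ℝ) (n : ℕ) : qBinom Q n 0 = 1 := by
  rw [qBinom_eq_monotoneTupleSum Q n.zero_le, monotoneTupleSum_zero_right]

lemma qBinom_succ_succ (Q : ℝ) (r j : ℕ) :
    qBinom Q (r + 1) (j + 1) = Q ^ (r - j) * qBinom Q r j + qBinom Q r (j + 1) := by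
  obtain hr | hr := lt_or_ge r j
  · rw [qBinom_of_lt Q hr, qBinom_of_lt Q (by omega), qBinom_of_lt Q (by omega), mul_zero,
      add_zero]
  obtain ⟨d, rfl⟩ := Nat.exists_eq_add_of_le hr
  rw [qBinom_eq_monotoneTupleSum Q (by omega : j + 1 ≤ j + d + 1),
    qBinom_eq_monotoneTupleSum Q (by omega : j ≤ j + d)]
  simp only [show j + d + 1 - (j + 1) = d by omega, Nat.add_sub_cancel_left]
  cases d with
  | zero =>
    rw [qBinom_of_lt Q (by omega), monotoneTupleSum_zero_left, monotoneTupleSum_zero_left]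
    ring
  | succ d =>
    rw [qBinom_eq_monotoneTupleSum Q (by omega : j + 1 ≤ j + (d + 1)),
      show j + (d + 1) - (j + 1) = d by omega, monotoneTupleSum_succ_succ, add_comm]


lemma qBracket_zero (q : ℝ) : qBracket q 0 = 0 := by simp [qBracket]

lemma qBracket_add {q : ℝ} (hq : 0 < q) (x y : ℝ) :
    qBracket q (x + y) = qBracket q x + q ^ x * qBracket q y := by
  unfold qBracket
  rw [Real.rpow_add hq]
  ring

section GenStirling

variable (s q : ℝ)

@[simp] lemma genStirling_zero_zero : genStirling s q 0 0 = 1 := by rw [genStirling]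

@[simp] lemma genStirling_succ_zero (n : ℕ) : genStirling s q (n + 1) 0 = 0 := by rw [genStirling]

lemma genStirling_of_lt {n k : ℕ} (h : n < k) : genStirling s q n k = 0 := by
  induction n generalizing k with
  | zero =>
    obtain ⟨k, rfl⟩ := Nat.exists_eq_succ_of_ne_zero h.ne'
    rw [genStirling]
  | succ n =>
    obtain ⟨k, rfl⟩ := Nat.exists_eq_succ_of_ne_zero (by omega : k ≠ 0)
    rw [genStirling, if_neg (by omega)]

lemma genStirling_succ_succ (n k : ℕ) :
    genStirling s q (n + 1) (k + 1)
      = q ^ (s * n - (s - 1) * k) * genStirling s q n k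
        + qBracket q (s * n - (s - 1) * (k + 1)) * genStirling s q n (k + 1) := by
  rw [genStirling]
  split_ifs with h
  · rfl
  · rw [genStirling_of_lt s q (by omega : n < k), genStirling_of_lt s q (by omega : n < k + 1)]
    ring

lemma sum_mul_genStirling_succ (φ : ℕ → ℝ) (N : ℕ) :
    ∑ r ∈ range (N + 1 + 1), φ r * genStirling s q (N + 1) r
      = ∑ r ∈ range (N + 1), (φ (r + 1) * q ^ (s * N - (s - 1) * r)
          + φ r * qBracket q (s * N - (s - 1) * r)) * genStirling s q N r := by
  set g : ℕ → ℝ := fun r => φ r * qBracket q (s * N - (s - 1) * r) * genStirling s q N r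
  -- either `S[N, 0] = 0`, or `N = 0` and `[0]_q = 0`
  have hg0 : g 0 = 0 := by
    cases N <;> simp [g, qBracket_zero]
  have hgN : g (N + 1) = 0 := by simp [g, genStirling_of_lt s q (by omega : N < N + 1)]
  have hshift : ∑ r ∈ range (N + 1), g (r + 1) = ∑ r ∈ range (N + 1), g r := by
    rw [← add_zero (∑ r ∈ range (N + 1), g (r + 1)), ← hg0, ← sum_range_succ', sum_range_succ,
      hgN, add_zero]
  have hterm (r : ℕ) : φ (r + 1) * genStirling s q (N + 1) (r + 1)
      = φ (r + 1) * q ^ (s * N - (s - 1) * r) * genStirling s q N r + g (r + 1) := by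
    rw [genStirling_succ_succ]
    push_cast [g]
    ring
  rw [sum_range_succ', genStirling_succ_zero, mul_zero, add_zero,
    sum_congr rfl fun r _ => hterm r, sum_add_distrib, hshift, ← sum_add_distrib]
  exact sum_congr rfl fun r _ => by simp only [g]; ring

end GenStirling

noncomputable def qBracketProd (q a δ : ℝ) (e : ℕ) : ℝ :=
  ∏ t ∈ range e, qBracket q (a + (t : ℝ) * δ)

lemma qBracketProd_succ (q a δ : ℝ) (e : ℕ) :
    qBracketProd q a δ (e + 1) = qBracketProd q a δ e * qBracket q (a + e * δ) :=
  prod_range_succ _ _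

section Convolution

-- The summand of the theorem is `S[k,m] * convCoeff j k r * S[n-k, r]`: the coefficient does not
-- depend on `n`, so the inner sum is a function `convRow j k (n - k)` of the row `n - k` alone.

variable {q : ℝ} (s : ℝ) (m : ℕ)

variable (q) in
noncomputable def convCoeff (j k r : ℕ) : ℝ :=
  q ^ (((j : ℝ) + 1) * ((k : ℝ) + ((k : ℝ) - (m : ℝ)) * (s - 1)) + (j : ℝ)) *
    qBinom (q ^ (s - 1)) r j *
    qBracketProd q (((k : ℝ) - (m : ℝ)) * (s - 1) + (k : ℝ) + 1) (s - 1) (r - j)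

lemma convCoeff_zero_step (hq : 0 < q) (k N r : ℕ) :
    convCoeff q s m 0 k (r + 1) * q ^ (s * N - (s - 1) * r)
        + convCoeff q s m 0 k r * qBracket q (s * N - (s - 1) * r)
      = qBracket q (s * (k + N + 1) - (s - 1) * (m + 1)) * convCoeff q s m 0 k r := by
  have hbr : qBracket q (s * (k + N + 1) - (s - 1) * (m + 1))
      = qBracket q (s * N - (s - 1) * r)
        + q ^ (s * N - (s - 1) * r) * qBracket q ((k - m) * (s - 1) + k + 1 + r * (s - 1)) := by
    rw [← qBracket_add hq]
    ring_nf
  simp only [convCoeff, qBinom_zero_right, Nat.sub_zero, qBracketProd_succ, hbr]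
  ring

lemma convCoeff_succ_step (hq : 0 < q) (j k N r : ℕ) :
    convCoeff q s m (j + 1) k (r + 1) * q ^ (s * N - (s - 1) * r)
        + convCoeff q s m (j + 1) k r * qBracket q (s * N - (s - 1) * r)
      = q ^ (s * (k + N + 1) - (s - 1) * (m + j + 1)) * convCoeff q s m j k r
        + qBracket q (s * (k + N + 1) - (s - 1) * (m + j + 2)) * convCoeff q s m (j + 1) k r := by
  set B := qBinom (q ^ (s - 1))
  set P := qBracketProd q (((k : ℝ) - (m : ℝ)) * (s - 1) + (k : ℝ) + 1) (s - 1)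
  have hA : B r j * (q ^ ((j + 1 + 1) * (k + (k - m) * (s - 1)) + (j + 1)) *
        (q ^ (s - 1)) ^ (r - j) * q ^ (s * N - (s - 1) * r))
      = B r j * (q ^ (s * (k + N + 1) - (s - 1) * (m + j + 1)) *
        q ^ ((j + 1) * (k + (k - m) * (s - 1)) + j)) := by
    rcases lt_or_ge r j with h | h
    · simp [B, qBinom_of_lt _ h]
    rw [← Real.rpow_natCast, ← Real.rpow_mul hq.le, ← Real.rpow_add hq, ← Real.rpow_add hq,
      ← Real.rpow_add hq, Nat.cast_sub h]
    ring_nf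
  have hB : B r (j + 1) * (P (r - j) * q ^ (s * N - (s - 1) * r)
        + P (r - (j + 1)) * qBracket q (s * N - (s - 1) * r))
      = B r (j + 1) *
          (qBracket q (s * (k + N + 1) - (s - 1) * (m + j + 2)) * P (r - (j + 1))) := by
    rcases lt_or_ge r (j + 1) with h | h
    · simp [B, qBinom_of_lt _ h]
    obtain ⟨e, rfl⟩ := Nat.exists_eq_add_of_le h
    have hbr : qBracket q (s * (k + N + 1) - (s - 1) * (m + j + 2))
        = qBracket q (s * N - (s - 1) * ((j + 1 + e : ℕ) : ℝ))
          + q ^ (s * N - (s - 1) * ((j + 1 + e : ℕ) : ℝ))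
            * qBracket q ((k - m) * (s - 1) + k + 1 + e * (s - 1)) := by
      rw [← qBracket_add hq]
      push_cast
      ring_nf
    rw [show j + 1 + e - j = e + 1 by omega, Nat.add_sub_cancel_left, hbr]
    simp only [P, qBracketProd_succ]
    ring
  simp only [convCoeff, qBinom_succ_succ, Nat.add_sub_add_right]
  push_cast
  linear_combination
    P (r - j) * hA + q ^ ((j + 1 + 1) * (k + (k - m) * (s - 1)) + (j + 1)) * hB

variable (q) in
noncomputable def convRow (j k N : ℕ) : ℝ :=
  ∑ r ∈ range (N + 1), convCoeff q s m j k r * genStirling s q N r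

lemma convRow_zero_succ (hq : 0 < q) {k n : ℕ} (hk : k ≤ n) :
    convRow q s m 0 k (n + 1 - k)
      = qBracket q (s * (n + 1) - (s - 1) * (m + 1)) * convRow q s m 0 k (n - k) := by
  obtain ⟨N, rfl⟩ := Nat.exists_eq_add_of_le hk
  rw [show k + N + 1 - k = N + 1 by omega, Nat.add_sub_cancel_left, convRow,
    sum_mul_genStirling_succ, convRow, mul_sum]
  refine sum_congr rfl fun r _ => ?_
  rw [convCoeff_zero_step s m hq]
  push_cast
  ring

lemma convRow_succ_succ (hq : 0 < q) (j : ℕ) {k n : ℕ} (hk : k ≤ n) :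
    convRow q s m (j + 1) k (n + 1 - k)
      = q ^ (s * (n + 1) - (s - 1) * (m + j + 1)) * convRow q s m j k (n - k)
        + qBracket q (s * (n + 1) - (s - 1) * (m + j + 2))
          * convRow q s m (j + 1) k (n - k) := by
  obtain ⟨N, rfl⟩ := Nat.exists_eq_add_of_le hk
  rw [show k + N + 1 - k = N + 1 by omega, Nat.add_sub_cancel_left, convRow,
    sum_mul_genStirling_succ, convRow, convRow, mul_sum, mul_sum, ← sum_add_distrib]
  refine sum_congr rfl fun r _ => ?_
  rw [convCoeff_succ_step s m hq]
  push_cast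
  ring

lemma convRow_zero (j k : ℕ) : convRow q s m j k 0 = convCoeff q s m j k 0 := by
  simp [convRow]

lemma convCoeff_zero_zero (k : ℕ) :
    convCoeff q s m 0 k 0 = q ^ (s * k - (s - 1) * m) := by
  simp only [convCoeff, qBinom_zero_right, Nat.zero_sub, qBracketProd, range_zero, prod_empty]
  push_cast
  ring_nf

lemma convCoeff_succ_zero (j k : ℕ) : convCoeff q s m (j + 1) k 0 = 0 := by
  simp [convCoeff, qBinom_of_lt]

theorem genStirling_succ_eq_sum_convRow (hq : 0 < q) (n j : ℕ) :
    genStirling s q (n + 1) (m + j + 1)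
      = ∑ k ∈ Icc m n, genStirling s q k m * convRow q s m j k (n - k) := by
  induction n generalizing j with
  | zero =>
    rcases m with _ | m
    · cases j <;> simp [convRow_zero, convCoeff_zero_zero, convCoeff_succ_zero,
        genStirling_succ_succ, genStirling_of_lt]
    · rw [Icc_eq_empty (by omega), sum_empty, genStirling_of_lt s q (by omega)]
  | succ n ih =>
    rcases lt_or_ge (n + 1) m with hm | hm
    · rw [Icc_eq_empty (by omega), sum_empty, genStirling_of_lt s q (by omega)]
    rw [sum_Icc_succ_top hm, Nat.sub_self, convRow_zero]
    cases j with
    | zero =>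
      rw [sum_congr rfl fun k hk => by
          rw [convRow_zero_succ s m hq (mem_Icc.1 hk).2, mul_left_comm],
        ← mul_sum, ← ih 0, convCoeff_zero_zero, genStirling_succ_succ, Nat.add_zero]
      push_cast
      ring
    | succ j =>
      rw [sum_congr rfl fun k hk => by rw [convRow_succ_succ s m hq j (mem_Icc.1 hk).2, mul_add,
        mul_left_comm, mul_left_comm (genStirling s q k m)], sum_add_distrib, ← mul_sum, ← mul_sum,
        ← ih j, ← ih (j + 1), convCoeff_succ_zero, mul_zero, add_zero, ← add_assoc,
        genStirling_succ_succ]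
      push_cast
      ring_nf

end Convolution

theorem stirling_shift_convolution_second_general (q s : ℝ) (hq : 0 < q) (n m j : ℕ) :
    genStirling s q (n + 1) (m + j + 1)
    = ∑ k ∈ Finset.Icc m n, ∑ r ∈ Finset.range (n - k + 1),
        genStirling s q k m *
          q ^ (((j : ℝ) + 1) * ((k : ℝ) + ((k : ℝ) - (m : ℝ)) * (s - 1)) + (j : ℝ)) *
          qBinom (q ^ (s - 1)) r j * genStirling s q (n - k) r *
          ∏ t ∈ Finset.range (r - j),
            qBracket q (((k : ℝ) - (m : ℝ)) * (s - 1) + (k : ℝ) + 1 + (t : ℝ) * (s - 1)) := by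
  rw [genStirling_succ_eq_sum_convRow s m hq n j]
  refine sum_congr rfl fun k _ => ?_
  rw [convRow, mul_sum]
  refine sum_congr rfl fun r _ => ?_
  rw [convCoeff, qBracketProd]
  ring

/-- Convolution identity for generalized `q`-Stirling numbers, second form
(Theorem on `S_{s,q}[n+1, m+j+1]`). -/
theorem stirling_shift_convolution_second (q s : ℝ) (hq : 0 < q) (hq1 : q ≠ 1) (n m j : ℕ) :
    genStirling s q (n + 1) (m + j + 1)
    = ∑ k ∈ Finset.Icc m n, ∑ r ∈ Finset.range (n - k + 1),
        genStirling s q k m *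
          q ^ (((j : ℝ) + 1) * ((k : ℝ) + ((k : ℝ) - (m : ℝ)) * (s - 1)) + (j : ℝ)) *
          qBinom (q ^ (s - 1)) r j * genStirling s q (n - k) r *
          ∏ t ∈ Finset.range (r - j),
            qBracket q (((k : ℝ) - (m : ℝ)) * (s - 1) + (k : ℝ) + 1 + (t : ℝ) * (s - 1)) :=
  stirling_shift_convolution_second_general q s hq n m j
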